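/- Let m ≥ k ≥ 2 be integers and let n ≥ (k−1)·C(m, k−1). Then N(n, k, m) = kn − (k−1)·C(m, k−1). -/

import Mathlib

/-!
Lower bound: a set `T` with `|T| = k - 1` contains at most `k - 1` of the blocks `X i`, since any
`k` of them would cover only `T`. A block with `|X i| = s < k` lies in at least `k - s` sets of size
`k - 1` (extend it to a `k`-set and drop one new point). Double counting the pairs `X i ⊆ T` gives
`∑ (k - |X i|) ≤ (k - 1) C(m, k - 1)`.

Upper bound: take every `(k - 1)`-subset of `[m]` exactly `k - 1` times and fill the remaining
blocks with a fixed `k`-set; two distinct `(k - 1)`-sets already cover `k` points.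
-/

/-- `Nmin n k m`: minimum total storage over all (n,N,k,m)-combinatorial batch codes. -/
noncomputable def Nmin (n k m : ℕ) : ℕ :=
  sInf {N : ℕ | ∃ X : Fin n → Finset (Fin m),
    (∑ t, (X t).card) = N ∧
    ∀ J : Finset (Fin n), 1 ≤ J.card → J.card ≤ k → J.card ≤ (J.biUnion X).card}

open Finset

variable {ι α : Type*}

section

variable [DecidableEq α]

theorem Finset.card_lt_card_union_of_card_eq_of_ne {A B : Finset α} (hcard : #A = #B)
    (hne : A ≠ B) : #A < #(A ∪ B) := by
  refine card_lt_card (ssubset_iff_subset_ne.2 ⟨subset_union_left, fun h => hne ?_⟩)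
  exact (eq_of_subset_of_card_le (h ▸ subset_union_right) hcard.le).symm

def IsBatchCode (k : ℕ) (X : ι → Finset α) : Prop :=
  ∀ J : Finset ι, 1 ≤ #J → #J ≤ k → #J ≤ #(J.biUnion X)

namespace IsBatchCode

variable {k : ℕ} {X : ι → Finset α}

theorem comp_injective {ι' : Type*} [DecidableEq ι] (hX : IsBatchCode k X) {f : ι' → ι}
    (hf : f.Injective) : IsBatchCode k (X ∘ f) := by
  intro J hJ₁ hJk
  have := hX (J.image f) (by rwa [card_image_of_injective _ hf])
    (by rwa [card_image_of_injective _ hf])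
  rwa [card_image_of_injective _ hf, image_biUnion] at this

theorem card_filter_subset_le [Fintype ι] (hX : IsBatchCode k X) {T : Finset α}
    (hT : #T < k) : #{i | X i ⊆ T} ≤ #T := by
  by_contra! hlt
  obtain ⟨J, hJ, hJcard⟩ := exists_subset_card_eq hlt
  have hunion : J.biUnion X ⊆ T := biUnion_subset.2 fun i hi => (mem_filter.1 (hJ hi)).2
  have := hX J (by omega) (by omega)
  have := card_le_card hunion
  omega

end IsBatchCode

theorem sub_card_le_card_filter_superset [Fintype α] {k : ℕ} (hk : k ≤ Fintype.card α)
    (s : Finset α) : k - #s ≤ #{T ∈ powersetCard (k - 1) univ | s ⊆ T} := by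
  obtain hks | hsk := le_or_gt k #s
  · simp [Nat.sub_eq_zero_of_le hks]
  obtain ⟨K, hsK, -, hK⟩ := exists_subsuperset_card_eq (subset_univ s) hsk.le (by simpa)
  calc k - #s = #(K \ s) := by rw [card_sdiff_of_subset hsK, hK]
    _ ≤ _ := by
      refine card_le_card_of_injOn K.erase (fun x hx => ?_) ((erase_injOn K).mono sdiff_subset)
      obtain ⟨hxK, hxs⟩ := mem_sdiff.1 hx
      simp only [coe_filter, mem_powersetCard, Set.mem_ofPred_eq, subset_univ, true_and]
      refine ⟨by rw [card_erase_of_mem hxK, hK], fun y hy => mem_erase.2 ⟨?_, hsK hy⟩⟩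
      rintro rfl
      exact hxs hy

theorem IsBatchCode.card_mul_le_sum_card_add [Fintype ι] [Fintype α] {k : ℕ}
    {X : ι → Finset α} (hX : IsBatchCode k X) (hk : 0 < k) (hkα : k ≤ Fintype.card α) :
    k * Fintype.card ι ≤ ∑ i, #(X i) + (k - 1) * (Fintype.card α).choose (k - 1) := by
  set P := powersetCard (k - 1) (univ : Finset α)
  have deficiency : ∑ i, (k - #(X i)) ≤ (k - 1) * (Fintype.card α).choose (k - 1) :=
    calc ∑ i, (k - #(X i)) ≤ ∑ i, #{T ∈ P | X i ⊆ T} :=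
          sum_le_sum fun i _ => sub_card_le_card_filter_superset hkα (X i)
      _ = ∑ T ∈ P, #{i | X i ⊆ T} :=
          sum_card_bipartiteAbove_eq_sum_card_bipartiteBelow (fun i T => X i ⊆ T)
      _ ≤ ∑ _T ∈ P, (k - 1) := sum_le_sum fun T hT => by
          have hT := (mem_powersetCard.1 hT).2
          simpa [hT] using hX.card_filter_subset_le (T := T) (by omega)
      _ = (k - 1) * (Fintype.card α).choose (k - 1) := by simp [P, mul_comm]
  calc k * Fintype.card ι = ∑ _i : ι, k := by simp [mul_comm]
    _ ≤ ∑ i, (#(X i) + (k - #(X i))) := sum_le_sum fun i _ => by omega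
    _ ≤ _ := by rw [sum_add_distrib]; omega

theorem isBatchCode_of_card_fiber_le [Fintype ι] {k : ℕ} {X : ι → Finset α}
    (hcard : ∀ i, k - 1 ≤ #(X i)) (hfiber : ∀ T, #T = k - 1 → #{i | X i = T} ≤ k - 1) :
    IsBatchCode k X := by
  intro J hJ₁ hJk
  have hsub : ∀ i ∈ J, X i ⊆ J.biUnion X := fun i hi => subset_biUnion_of_mem X hi
  by_cases hbig : ∃ i ∈ J, k ≤ #(X i)
  · obtain ⟨i, hi, hki⟩ := hbig
    exact hJk.trans (hki.trans (card_le_card (hsub i hi)))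
  push Not at hbig
  obtain ⟨i₀, hi₀⟩ := card_pos.1 (by omega : 0 < #J)
  have hsmall : ∀ i ∈ J, #(X i) = k - 1 := fun i hi => by
    have := hcard i
    have := hbig i hi
    omega
  by_cases hconst : ∀ i ∈ J, X i = X i₀
  · calc #J ≤ #{i | X i = X i₀} := card_le_card fun i hi => by simpa using hconst i hi
      _ ≤ #(X i₀) := (hfiber _ (hsmall i₀ hi₀)).trans (hsmall i₀ hi₀).ge
      _ ≤ _ := card_le_card (hsub i₀ hi₀)
  push Not at hconst
  obtain ⟨i, hi, hne⟩ := hconst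
  have hlt := card_lt_card_union_of_card_eq_of_ne ((hsmall i hi).trans (hsmall i₀ hi₀).symm) hne
  rw [hsmall i hi] at hlt
  have := card_le_card (union_subset (hsub i hi) (hsub i₀ hi₀))
  omega

end

def extremalCode [Fintype α] (K : Finset α) (k a : ℕ) :
    (powersetCard (k - 1) (univ : Finset α) × Fin (k - 1)) ⊕ Fin a → Finset α :=
  Sum.elim (fun p => p.1) (fun _ => K)

section extremalCode

variable [Fintype α] {K : Finset α} {k : ℕ} (a : ℕ)

theorem isBatchCode_extremalCode [DecidableEq α] (hk : 0 < k) (hK : #K = k) :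
    IsBatchCode k (extremalCode K k a) := by
  refine isBatchCode_of_card_fiber_le ?_ fun T hT => ?_
  · rintro (⟨⟨T, hT⟩, _⟩ | _)
    · exact (mem_powersetCard.1 hT).2.ge
    · exact hK ▸ Nat.sub_le k 1
  have hTP : T ∈ powersetCard (k - 1) univ := mem_powersetCard.2 ⟨subset_univ T, hT⟩
  calc #{x | extremalCode K k a x = T}
      ≤ #(univ.image fun j : Fin (k - 1) => Sum.inl (⟨T, hTP⟩, j)) := card_le_card ?_
    _ ≤ k - 1 := card_image_le.trans (by simp)
  intro x hx
  obtain ⟨-, hx⟩ := mem_filter.1 hx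
  rcases x with ⟨⟨T', hT'⟩, j⟩ | _ <;>
    simp only [extremalCode, Sum.elim_inl, Sum.elim_inr] at hx
  · subst hx; simp
  · rw [← hx, hK] at hT; omega

theorem sum_card_extremalCode :
    ∑ x, #(extremalCode K k a x) =
      (Fintype.card α).choose (k - 1) * (k - 1) * (k - 1) + a * #K := by
  rw [Fintype.sum_sum_type]
  simp only [extremalCode, Sum.elim_inl, Sum.elim_inr, sum_const, card_univ, smul_eq_mul,
    Fintype.card_fin]
  rw [sum_congr rfl fun p _ => (mem_powersetCard.1 p.1.2).2]
  simp

end extremalCode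

theorem exists_isBatchCode_sum_card_add_eq {n k m : ℕ} (hk : 0 < k) (hkm : k ≤ m)
    (hn : (k - 1) * m.choose (k - 1) ≤ n) :
    ∃ X : Fin n → Finset (Fin m),
      IsBatchCode k X ∧ ∑ i, #(X i) + (k - 1) * m.choose (k - 1) = k * n := by
  obtain ⟨K, -, hK⟩ := exists_subset_card_eq (s := (univ : Finset (Fin m))) (by simpa)
  set a := n - (k - 1) * m.choose (k - 1)
  have e : Fin n ≃ (powersetCard (k - 1) (univ : Finset (Fin m)) × Fin (k - 1)) ⊕ Fin a :=
    (Fintype.equivFinOfCardEq (by simp [mul_comm]; omega)).symm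
  refine ⟨extremalCode K k a ∘ e,
    (isBatchCode_extremalCode a hk hK).comp_injective e.injective, ?_⟩
  rw [Function.comp_def, e.sum_comp (fun x => #(extremalCode K k a x)), sum_card_extremalCode,
    Fintype.card_fin, hK]
  have ha : n = a + (k - 1) * m.choose (k - 1) := by omega
  clear_value a
  obtain ⟨j, rfl⟩ : ∃ j, k = j + 1 := ⟨k - 1, by omega⟩
  rw [ha, Nat.add_sub_cancel]
  ring

/-- For `m ≥ k ≥ 2` and `n ≥ (k-1)·C(m, k-1)`, the minimum total storage is
`N(n,k,m) = kn - (k-1)·C(m, k-1)`. -/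
theorem Nmin_large_n (n k m : ℕ) (hk : 2 ≤ k) (hkm : k ≤ m)
    (hn : (k - 1) * Nat.choose m (k - 1) ≤ n) :
    Nmin n k m = k * n - (k - 1) * Nat.choose m (k - 1) := by
  obtain ⟨X, hX, hsum⟩ := exists_isBatchCode_sum_card_add_eq (by omega : 0 < k) hkm hn
  refine le_antisymm (Nat.sInf_le ⟨X, by omega, hX⟩) (le_csInf ⟨_, X, rfl, hX⟩ ?_)
  rintro _ ⟨Y, rfl, hY⟩
  have := IsBatchCode.card_mul_le_sum_card_add hY (by omega) (by simpa using hkm)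
  rw [Fintype.card_fin, Fintype.card_fin] at this
  omega
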